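/- For every controlled Markov process and every finite horizon T ≥ 1, there exists a Markovian policy π* such that H(d_T^{π*}) equals the supremum of H(d_T^π) over all (possibly non-Markovian, possibly randomized) policies π; that is, a Markovian policy maximizes the entropy of the marginal state distribution over the class of all policies. -/

import Mathlib

open scoped BigOperators

/-- A controlled Markov process over finite state space `S` and action space `A`:
a transition kernel `P` and an initial distribution `μ`. -/
structure CMP (S A : Type) [Fintype S] [Fintype A] where
  P : S → A → S → ℝ
  P_nonneg : ∀ s a s', 0 ≤ P s a s'
  P_sum_one : ∀ s a, ∑ s', P s a s' = 1
  μ : S → ℝ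
  μ_nonneg : ∀ s, 0 ≤ μ s
  μ_sum_one : ∑ s, μ s = 1

/-- A history of `t` steps: states `s_0, …, s_t` and actions `a_0, …, a_{t-1}`. -/
abbrev Hist (S A : Type) (t : ℕ) : Type := (Fin (t + 1) → S) × (Fin t → A)

/-- A continuation of `k` further steps: actions `a_0, …, a_{k-1}` together with the
states those actions lead to. -/
abbrev Contin (S A : Type) (k : ℕ) : Type := (Fin k → A) × (Fin k → S)

/-- A general (possibly non-Markovian, possibly randomized) policy: for every time `t`
and history of length `t`, a probability distribution over actions. -/
structure Policy (S A : Type) [Fintype A] where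
  p : ∀ t : ℕ, Hist S A t → A → ℝ
  nonneg : ∀ t h a, 0 ≤ p t h a
  sum_one : ∀ t h, ∑ a, p t h a = 1

/-- A Markovian (randomized, time-dependent) policy: for every time `t` and current
state `s`, a probability distribution over actions. -/
structure MPolicy (S A : Type) [Fintype A] where
  p : ℕ → S → A → ℝ
  nonneg : ∀ t s a, 0 ≤ p t s a
  sum_one : ∀ t s, ∑ a, p t s a = 1

/-- The last (current) state of a history. -/
def lastState {S A : Type} {t : ℕ} (h : Hist S A t) : S := h.1 (Fin.last t)

/-- A Markovian policy viewed as a general policy. -/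
def MPolicy.toPolicy {S A : Type} [Fintype A] (m : MPolicy S A) : Policy S A where
  p := fun t h a => m.p t (lastState h) a
  nonneg := fun t h a => m.nonneg t _ a
  sum_one := fun t h => m.sum_one t _

/-- The general policy induced by a deterministic non-Markovian policy
(a function from histories to actions). -/
def detPolicy {S A : Type} [Fintype A] [DecidableEq A] (f : ∀ t : ℕ, Hist S A t → A) :
    Policy S A where
  p := fun t h a => if a = f t h then 1 else 0
  nonneg := by intro t h a; (try dsimp only); split <;> norm_num
  sum_one := by intro t h; simp

/-- The length-`i` prefix of a history. -/
def histTake {S A : Type} {t : ℕ} (h : Hist S A t) (i : ℕ) (hi : i ≤ t) : Hist S A i :=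
  (fun j => h.1 ⟨(j : ℕ), by have := j.isLt; omega⟩,
   fun j => h.2 ⟨(j : ℕ), by have := j.isLt; omega⟩)

/-- The probability that policy `π` generates the history `h` when interacting with
the CMP `M` (initial state from `μ`, actions from `π`, transitions from `P`). -/
noncomputable def histProb {S A : Type} [Fintype S] [Fintype A]
    (M : CMP S A) (π : Policy S A) {t : ℕ} (h : Hist S A t) : ℝ :=
  M.μ (h.1 0) * ∏ i : Fin t,
    (π.p i (histTake h i (Nat.le_of_lt i.isLt)) (h.2 i) *
      M.P (h.1 i.castSucc) (h.2 i) (h.1 i.succ))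

/-- The `t`-step state distribution `d_t^π(s) = Pr(s_t = s)`. -/
noncomputable def stateDist {S A : Type} [Fintype S] [Fintype A] [DecidableEq S]
    (M : CMP S A) (π : Policy S A) (t : ℕ) (s : S) : ℝ :=
  ∑ h : Hist S A t, if lastState h = s then histProb M π h else 0

/-- Shannon entropy of a distribution on a finite set (`0 log 0 = 0` since `Real.log 0 = 0`). -/
noncomputable def entropy {S : Type} [Fintype S] (d : S → ℝ) : ℝ :=
  -∑ s, d s * Real.log (d s)

/-- The state visitation frequency of a trajectory with `n+1` states. -/
noncomputable def visitFreq {S A : Type} [Fintype S] [DecidableEq S] {n : ℕ}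
    (h : Hist S A n) (s : S) : ℝ :=
  (∑ i : Fin (n + 1), if h.1 i = s then (1 : ℝ) else 0) / ((n : ℝ) + 1)

/-- The marginal state distribution `d_T^π(s) = (1/T) ∑_{t<T} d_t^π(s)`. -/
noncomputable def marginalDist {S A : Type} [Fintype S] [Fintype A] [DecidableEq S]
    (M : CMP S A) (π : Policy S A) (T : ℕ) (s : S) : ℝ :=
  (1 / (T : ℝ)) * ∑ t ∈ Finset.range T, stateDist M π t s

/-- The `γ`-discounted state distribution `d_γ^π(s) = (1-γ) ∑_t γ^t d_t^π(s)`. -/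
noncomputable def discountedDist {S A : Type} [Fintype S] [Fintype A] [DecidableEq S]
    (M : CMP S A) (π : Policy S A) (γ : ℝ) (s : S) : ℝ :=
  (1 - γ) * ∑' t : ℕ, γ ^ t * stateDist M π t s

/-- Concatenation of a length-`t` history with a `k`-step continuation. -/
def histAppend {S A : Type} {t k : ℕ} (h : Hist S A t) (c : Contin S A k) : Hist S A (t + k) :=
  (fun j => if hj : (j : ℕ) ≤ t then h.1 ⟨(j : ℕ), by omega⟩
            else c.2 ⟨(j : ℕ) - t - 1, by have := j.isLt; omega⟩,
   fun j => if hj : (j : ℕ) < t then h.2 ⟨(j : ℕ), hj⟩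
            else c.1 ⟨(j : ℕ) - t, by have := j.isLt; omega⟩)

/-- The probability that, after the prefix history `h`, running `π` (conditioned on the
full history) produces the `k`-step continuation `c`. -/
noncomputable def contProb {S A : Type} [Fintype S] [Fintype A]
    (M : CMP S A) (π : Policy S A) {t k : ℕ} (h : Hist S A t) (c : Contin S A k) : ℝ :=
  ∏ i : Fin k,
    (π.p (t + (i : ℕ))
        (histTake (histAppend h c) (t + (i : ℕ)) (by have := i.isLt; omega))
        ((histAppend h c).2 ⟨t + (i : ℕ), by have := i.isLt; omega⟩) *
      M.P ((histAppend h c).1 ⟨t + (i : ℕ), by have := i.isLt; omega⟩)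
        ((histAppend h c).2 ⟨t + (i : ℕ), by have := i.isLt; omega⟩)
        ((histAppend h c).1 ⟨t + (i : ℕ) + 1, by have := i.isLt; omega⟩))

/-- The expected entropy of the state visitation frequency of the completed trajectory,
when running `π` for `k` further steps after the prefix history `h`. -/
noncomputable def expEntFrom {S A : Type} [Fintype S] [Fintype A] [DecidableEq S]
    (M : CMP S A) (π : Policy S A) {t : ℕ} (k : ℕ) (h : Hist S A t) : ℝ :=
  ∑ c : Contin S A k, contProb M π h c * entropy (visitFreq (histAppend h c))

/-- A history has positive probability (under some policy) iff its initial state and all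
its transitions have positive probability. -/
def Reachable {S A : Type} [Fintype S] [Fintype A] (M : CMP S A) {t : ℕ}
    (h : Hist S A t) : Prop :=
  0 < M.μ (h.1 0) ∧ ∀ i : Fin t, 0 < M.P (h.1 i.castSucc) (h.2 i) (h.1 i.succ)

/-!
Replacing the action law at time `t` by its conditional given the current state,
`π̄_t(a | s) = Pr(a_t = a | s_t = s)`, gives a Markovian policy with the same state distributions
`d_t`: by induction on `t`, since `d_{t+1}` depends on the policy only through the joint law of
`(s_t, a_t)`. Hence the supremum may be taken over Markovian policies only. These form a compact
product of simplices, on which `d_t` is a polynomial in the action weights and the entropy of the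
marginal is continuous, so the supremum is a maximum.
-/

section Histories

variable {S A : Type}

def snocHist {t : ℕ} (h : Hist S A t) (a : A) (s : S) : Hist S A (t + 1) :=
  (Fin.snoc h.1 s, Fin.snoc h.2 a)

@[simp]
theorem lastState_snocHist {t : ℕ} (h : Hist S A t) (a : A) (s : S) :
    lastState (snocHist h a s) = s := by
  simp [lastState, snocHist]

theorem histTake_snocHist {t i : ℕ} (h : Hist S A t) (a : A) (s : S) (hi : i ≤ t) :
    histTake (snocHist h a s) i (hi.trans t.le_succ) = histTake h i hi :=
  Prod.ext (funext fun j => Fin.snoc_castSucc (α := fun _ => S) s h.1 ⟨j, by omega⟩)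
    (funext fun j => Fin.snoc_castSucc (α := fun _ => A) a h.2 ⟨j, by omega⟩)

@[simp]
theorem histTake_snocHist_self {t : ℕ} (h : Hist S A t) (a : A) (s : S) :
    histTake (snocHist h a s) t t.le_succ = h :=
  histTake_snocHist h a s le_rfl

def histSnocEquiv (S A : Type) (t : ℕ) : Hist S A t × A × S ≃ Hist S A (t + 1) where
  toFun x := snocHist x.1 x.2.1 x.2.2
  invFun h := ((Fin.init h.1, Fin.init h.2), h.2 (Fin.last t), h.1 (Fin.last (t + 1)))
  left_inv := by
    rintro ⟨⟨f, g⟩, a, s⟩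
    simp [snocHist]
  right_inv := by
    rintro ⟨f, g⟩
    simp [snocHist, Fin.snoc_init_self]

def histZeroEquiv (S A : Type) : S ≃ Hist S A 0 where
  toFun s := (fun _ => s, Fin.elim0)
  invFun h := h.1 0
  left_inv _ := rfl
  right_inv _ := Prod.ext (funext fun j => congrArg _ (Subsingleton.elim (α := Fin 1) 0 j))
    (funext fun j => j.elim0)

@[simp]
theorem lastState_histZeroEquiv (s : S) : lastState (histZeroEquiv S A s) = s := rfl

theorem sum_hist_succ {M : Type*} [AddCommMonoid M] [Fintype S] [Fintype A] {t : ℕ}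
    (f : Hist S A (t + 1) → M) :
    ∑ h, f h = ∑ h : Hist S A t, ∑ a, ∑ s, f (snocHist h a s) := by
  rw [← (histSnocEquiv S A t).sum_comp, Fintype.sum_prod_type]
  exact Finset.sum_congr rfl fun h _ => Fintype.sum_prod_type _

end Histories

section Probabilities

variable {S A : Type} [Fintype S] [Fintype A] (M : CMP S A) (π : Policy S A)

theorem histProb_nonneg {t : ℕ} (h : Hist S A t) : 0 ≤ histProb M π h :=
  mul_nonneg (M.μ_nonneg _) <| Finset.prod_nonneg fun _ _ =>
    mul_nonneg (π.nonneg ..) (M.P_nonneg ..)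

theorem histProb_histZeroEquiv (s : S) : histProb M π (histZeroEquiv S A s) = M.μ s := by
  simp [histProb, histZeroEquiv]

theorem histProb_snocHist {t : ℕ} (h : Hist S A t) (a : A) (s : S) :
    histProb M π (snocHist h a s) =
      histProb M π h * (π.p t h a * M.P (lastState h) a s) := by
  have hfactor (i : Fin t) :
      π.p i (histTake (snocHist h a s) i (by omega)) ((snocHist h a s).2 i.castSucc) *
          M.P ((snocHist h a s).1 i.castSucc.castSucc) ((snocHist h a s).2 i.castSucc)
            ((snocHist h a s).1 i.castSucc.succ) =
        π.p i (histTake h i i.isLt.le) (h.2 i) * M.P (h.1 i.castSucc) (h.2 i) (h.1 i.succ) := by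
    rw [histTake_snocHist h a s i.isLt.le]
    simp only [snocHist, Fin.succ_castSucc, Fin.snoc_castSucc]
  simp only [histProb, Fin.prod_univ_castSucc, Fin.val_castSucc, Fin.val_last, hfactor,
    histTake_snocHist_self]
  simp [snocHist, lastState, mul_assoc]

end Probabilities

section StateActionDist

variable {S A : Type} [Fintype S] [Fintype A] [DecidableEq S] (M : CMP S A) (π : Policy S A)

/-- `Pr(s_t = s, a_t = a)`. -/
noncomputable def stateActionDist (t : ℕ) (s : S) (a : A) : ℝ :=
  ∑ h : Hist S A t, if lastState h = s then histProb M π h * π.p t h a else 0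

theorem stateDist_nonneg (t : ℕ) (s : S) : 0 ≤ stateDist M π t s :=
  Finset.sum_nonneg fun h _ => by
    split_ifs
    exacts [histProb_nonneg M π h, le_rfl]

theorem stateActionDist_nonneg (t : ℕ) (s : S) (a : A) : 0 ≤ stateActionDist M π t s a :=
  Finset.sum_nonneg fun h _ => by
    split_ifs
    exacts [mul_nonneg (histProb_nonneg M π h) (π.nonneg ..), le_rfl]

theorem sum_stateActionDist (t : ℕ) (s : S) :
    ∑ a, stateActionDist M π t s a = stateDist M π t s := by
  simp only [stateActionDist, stateDist]
  rw [Finset.sum_comm]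
  refine Finset.sum_congr rfl fun h _ => ?_
  split_ifs
  · rw [← Finset.mul_sum, π.sum_one, mul_one]
  · exact Finset.sum_const_zero

theorem stateActionDist_eq_zero_of_stateDist_eq_zero {t : ℕ} {s : S}
    (hs : stateDist M π t s = 0) (a : A) : stateActionDist M π t s a = 0 := by
  refine le_antisymm ?_ (stateActionDist_nonneg M π t s a)
  calc stateActionDist M π t s a ≤ ∑ a, stateActionDist M π t s a :=
        Finset.single_le_sum (fun a _ => stateActionDist_nonneg M π t s a) (Finset.mem_univ a)
    _ = 0 := by rw [sum_stateActionDist, hs]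

theorem stateDist_zero : stateDist M π 0 = M.μ := by
  funext s
  rw [stateDist, ← (histZeroEquiv S A).sum_comp]
  simp [histProb_histZeroEquiv]

theorem stateDist_succ (t : ℕ) (s' : S) :
    stateDist M π (t + 1) s' = ∑ s, ∑ a, stateActionDist M π t s a * M.P s a s' := by
  simp only [stateDist, sum_hist_succ, lastState_snocHist, histProb_snocHist,
    Finset.sum_ite_eq', Finset.mem_univ, if_true]
  simp only [stateActionDist, Finset.sum_mul, ite_mul, zero_mul]
  rw [Finset.sum_comm]
  symm
  rw [Finset.sum_comm]
  refine Finset.sum_congr rfl fun a _ => ?_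
  rw [Finset.sum_comm]
  simp only [Finset.sum_ite_eq, Finset.mem_univ, if_true, mul_assoc]

theorem stateActionDist_toPolicy (m : MPolicy S A) (t : ℕ) (s : S) (a : A) :
    stateActionDist M m.toPolicy t s a = stateDist M m.toPolicy t s * m.p t s a := by
  rw [stateActionDist, stateDist, Finset.sum_mul]
  refine Finset.sum_congr rfl fun h _ => ?_
  split_ifs with hs
  · rw [← hs]
    rfl
  · rw [zero_mul]

end StateActionDist

section Markovization

variable {S A : Type} [Fintype A] [Nonempty A]

noncomputable def MPolicy.uniform : MPolicy S A where
  p _ _ _ := (Fintype.card A : ℝ)⁻¹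
  nonneg _ _ _ := by positivity
  sum_one _ _ := by simp

instance : Nonempty (MPolicy S A) := ⟨MPolicy.uniform⟩

variable [Fintype S] [DecidableEq S]

/-- `π̄_t(a | s) = Pr(a_t = a | s_t = s)`; what it does on states of probability zero at time `t`
does not matter. -/
noncomputable def markovize (M : CMP S A) (π : Policy S A) : MPolicy S A where
  p t s a := if stateDist M π t s = 0 then MPolicy.uniform.p t s a
    else stateActionDist M π t s a / stateDist M π t s
  nonneg t s a := by
    split_ifs
    exacts [MPolicy.uniform.nonneg t s a,
      div_nonneg (stateActionDist_nonneg M π t s a) (stateDist_nonneg M π t s)]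
  sum_one t s := by
    split_ifs with h0
    · exact MPolicy.uniform.sum_one t s
    · rw [← Finset.sum_div, sum_stateActionDist, div_self h0]

variable (M : CMP S A) (π : Policy S A)

theorem stateDist_mul_markovize (t : ℕ) (s : S) (a : A) :
    stateDist M π t s * (markovize M π).p t s a = stateActionDist M π t s a := by
  by_cases h0 : stateDist M π t s = 0
  · rw [h0, zero_mul, stateActionDist_eq_zero_of_stateDist_eq_zero M π h0]
  · simp only [markovize, if_neg h0]
    exact mul_div_cancel₀ _ h0

theorem stateDist_markovize (t : ℕ) :
    stateDist M (markovize M π).toPolicy t = stateDist M π t := by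
  induction t with
  | zero => rw [stateDist_zero, stateDist_zero]
  | succ t ih =>
    funext s'
    simp only [stateDist_succ, stateActionDist_toPolicy, ih, stateDist_mul_markovize]

theorem marginalDist_markovize (T : ℕ) :
    marginalDist M (markovize M π).toPolicy T = marginalDist M π T := by
  funext s
  simp only [marginalDist, stateDist_markovize]

end Markovization

section MarkovDynamics

variable {S A : Type} [Fintype S] [Fintype A] (M : CMP S A)

/-- Defined for every real table `p`, not only for policies, so that continuity in `p` can be
stated on the product space `ℕ → S → A → ℝ`. -/
noncomputable def markovDist (p : ℕ → S → A → ℝ) : ℕ → S → ℝ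
  | 0 => M.μ
  | t + 1 => fun s' => ∑ s, ∑ a, markovDist p t s * p t s a * M.P s a s'

theorem stateDist_toPolicy [DecidableEq S] (m : MPolicy S A) (t : ℕ) :
    stateDist M m.toPolicy t = markovDist M m.p t := by
  induction t with
  | zero => exact stateDist_zero M _
  | succ t ih =>
    funext s'
    simp only [stateDist_succ, stateActionDist_toPolicy, ih, markovDist]

theorem continuous_markovDist (t : ℕ) (s : S) :
    Continuous fun p : ℕ → S → A → ℝ => markovDist M p t s := by
  induction t generalizing s with
  | zero => exact continuous_const
  | succ t ih =>
    exact continuous_finsetSum _ fun s' _ => continuous_finsetSum _ fun a _ => by fun_prop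

end MarkovDynamics

theorem isCompact_range_mPolicy_p {S A : Type} [Fintype A] :
    IsCompact (Set.range (MPolicy.p : MPolicy S A → ℕ → S → A → ℝ)) := by
  have hrange : Set.range (MPolicy.p : MPolicy S A → ℕ → S → A → ℝ) =
      Set.univ.pi fun _ => Set.univ.pi fun _ => stdSimplex ℝ A := by
    ext p
    simp only [Set.mem_range, Set.mem_univ_pi, stdSimplex, Set.mem_ofPred_eq]
    constructor
    · rintro ⟨m, rfl⟩
      exact fun t s => ⟨m.nonneg t s, m.sum_one t s⟩
    · exact fun hp => ⟨⟨p, fun t s => (hp t s).1, fun t s => (hp t s).2⟩, rfl⟩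
  rw [hrange]
  exact isCompact_univ_pi fun _ => isCompact_univ_pi fun _ => isCompact_stdSimplex ℝ A

theorem continuous_entropy {S : Type} [Fintype S] : Continuous (entropy : (S → ℝ) → ℝ) :=
  (continuous_finsetSum _ fun s _ => Real.continuous_mul_log.comp (continuous_apply s)).neg

theorem markovian_maximizes_marginal_entropy_general
    {S A : Type} [Fintype S] [Fintype A] [Nonempty A] [DecidableEq S]
    (M : CMP S A) (T : ℕ) :
    ∃ π' : MPolicy S A,
      entropy (fun s => marginalDist M π'.toPolicy T s)
        = ⨆ π : Policy S A, entropy (fun s => marginalDist M π T s) := by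
  set F : (ℕ → S → A → ℝ) → ℝ :=
    fun p => entropy fun s => 1 / (T : ℝ) * ∑ t ∈ Finset.range T, markovDist M p t s
  have hF : Continuous F := continuous_entropy.comp <| continuous_pi fun s =>
    continuous_const.mul <| continuous_finsetSum _ fun t _ => continuous_markovDist M t s
  have hvalue (m : MPolicy S A) :
      entropy (fun s => marginalDist M m.toPolicy T s) = F m.p := by
    simp only [F, marginalDist, stateDist_toPolicy]
  obtain ⟨_, ⟨π', rfl⟩, hmax⟩ :=
    isCompact_range_mPolicy_p.exists_isMaxOn (Set.range_nonempty _) hF.continuousOn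
  have hle (π : Policy S A) : entropy (fun s => marginalDist M π T s) ≤
      entropy (fun s => marginalDist M π'.toPolicy T s) := by
    rw [← marginalDist_markovize M π, hvalue, hvalue]
    exact hmax (Set.mem_range_self _)
  have hgreatest : IsGreatest (Set.range fun π : Policy S A => entropy (marginalDist M π T))
      (entropy (marginalDist M π'.toPolicy T)) :=
    ⟨Set.mem_range_self _, Set.forall_mem_range.2 hle⟩
  exact ⟨π', hgreatest.csSup_eq.symm⟩

/-- for every horizon `T ≥ 1` there is a Markovian policy whose marginal
state distribution entropy attains the supremum over all (possibly non-Markovian,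
possibly randomized) policies. -/
theorem markovian_maximizes_marginal_entropy
    {S A : Type} [Fintype S] [Fintype A] [Nonempty S] [Nonempty A] [DecidableEq S]
    (M : CMP S A) (T : ℕ) (hT : 1 ≤ T) :
    ∃ π' : MPolicy S A,
      entropy (fun s => marginalDist M π'.toPolicy T s)
        = ⨆ π : Policy S A, entropy (fun s => marginalDist M π T s) :=
  markovian_maximizes_marginal_entropy_general M T
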